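/- arXiv:2102.00857 — 2 statements merged into one kernel-verified Lean document; each statement's English description precedes it below -/
import Mathlib

section
/- A Banach space X is reflexive if and only if R(X) = 0, where R(X) = sup over sequences (x_n) in B_X of inf over convex block subsequences (z_n) of ca((z_n)), with ca((z_n)) = inf_n sup_{k,l ≥ n} ‖z_k − z_l‖. -/
open Filter Topology Metric Set NormedSpace

noncomputable section

/-- `y` is a convex block subsequence of `x`. -/
def IsConvexBlock {E : Type*} [AddCommGroup E] [Module ℝ E] (x y : ℕ → E) : Prop :=
  ∃ k : ℕ → ℕ, k 0 = 0 ∧ StrictMono k ∧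
    ∀ n, y n ∈ convexHull ℝ (x '' Set.Ico (k n) (k (n + 1)))

variable (X : Type*) [NormedAddCommGroup X] [NormedSpace ℝ X]

/-- A set is weakly compact if its image in the weak topology is compact. -/
def WeaklyCompact (K : Set X) : Prop := IsCompact (toWeakSpace ℝ X '' K)

/-- A sequence is weakly null. -/
def WeaklyNull (x : ℕ → X) : Prop :=
  ∀ f : X →L[ℝ] ℝ, Tendsto (fun n => f (x n)) atTop (𝓝 0)

/-- A sequence in the dual is weak* null. -/
def WeakStarNull (f : ℕ → X →L[ℝ] ℝ) : Prop :=
  ∀ x : X, Tendsto (fun n => f n x) atTop (𝓝 0)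

/-- A sequence in the dual is weak* Cauchy. -/
def WeakStarCauchy (f : ℕ → X →L[ℝ] ℝ) : Prop :=
  ∀ x : X, ∃ L : ℝ, Tendsto (fun n => f n x) atTop (𝓝 L)

variable {X}

/-- α((f_n)) = sup over weakly compact K ⊆ B_X of limsup_n sup_{x ∈ K} |⟨f_n, x⟩|. -/
def alphaQ (f : ℕ → X →L[ℝ] ℝ) : ℝ :=
  sSup { r | ∃ K : Set X, K ⊆ closedBall 0 1 ∧ WeaklyCompact X K ∧
    r = limsup (fun n => sSup ((fun x => |f n x|) '' K)) atTop }

/-- β((f_n)) = sup over weakly null (x_n) in B_X of limsup_n |⟨f_n, x_n⟩|. -/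
def betaQ (f : ℕ → X →L[ℝ] ℝ) : ℝ :=
  sSup { r | ∃ x : ℕ → X, (∀ n, x n ∈ closedBall (0 : X) 1) ∧ WeaklyNull X x ∧
    r = limsup (fun n => |f n (x n)|) atTop }

/-- ca_{ρ*}((f_n)): measures Mackey-Cauchyness. -/
def caRho (f : ℕ → X →L[ℝ] ℝ) : ℝ :=
  sSup { r | ∃ K : Set X, K ⊆ closedBall 0 1 ∧ WeaklyCompact X K ∧
    r = ⨅ n : ℕ, sSup { t | ∃ k ≥ n, ∃ l ≥ n, ∃ x ∈ K, t = |(f k - f l) x| } }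

/-- ca((z_n)) = inf_n sup_{k,l ≥ n} ‖z_k - z_l‖. -/
def caSeq {E : Type*} [NormedAddCommGroup E] (z : ℕ → E) : ℝ :=
  ⨅ n : ℕ, sSup { r | ∃ k ≥ n, ∃ l ≥ n, r = ‖z k - z l‖ }

variable (X)

def K1 : ℝ :=
  sSup { r | ∃ f : ℕ → X →L[ℝ] ℝ, (∀ n, ‖f n‖ ≤ 1) ∧ WeakStarNull X f ∧
    r = sInf { s | ∃ g, IsConvexBlock f g ∧ s = alphaQ g } }

def K2 : ℝ :=
  sSup { r | ∃ f : ℕ → X →L[ℝ] ℝ, (∀ n, ‖f n‖ ≤ 1) ∧ WeakStarNull X f ∧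
    r = sInf { s | ∃ g, IsConvexBlock f g ∧ s = betaQ g } }

def K3 : ℝ :=
  sSup { r | ∃ f : ℕ → X →L[ℝ] ℝ, (∀ n, ‖f n‖ ≤ 1) ∧ WeakStarCauchy X f ∧
    r = sInf { s | ∃ g, IsConvexBlock f g ∧ s = caRho g } }

/-- Property (K). -/
def PropertyK : Prop :=
  ∀ f : ℕ → X →L[ℝ] ℝ, WeakStarNull X f → ∃ g, IsConvexBlock f g ∧ alphaQ g = 0

/-- The Grothendieck property: every weak* null sequence in the dual is weakly null. -/
def Grothendieck : Prop :=
  ∀ f : ℕ → X →L[ℝ] ℝ, WeakStarNull X f →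
    ∀ Φ : (X →L[ℝ] ℝ) →L[ℝ] ℝ, Tendsto (fun n => Φ (f n)) atTop (𝓝 0)

def GQ : ℝ :=
  sSup { r | ∃ f : ℕ → X →L[ℝ] ℝ, (∀ n, ‖f n‖ ≤ 1) ∧ WeakStarNull X f ∧
    r = sInf { s | ∃ g, IsConvexBlock f g ∧ s = limsup (fun n => ‖g n‖) atTop } }

def RQ : ℝ :=
  sSup { r | ∃ x : ℕ → X, (∀ n, x n ∈ closedBall (0 : X) 1) ∧
    r = sInf { s | ∃ z, IsConvexBlock x z ∧ s = caSeq z } }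

/-- weak* cluster points in the bidual of a sequence in the bidual. -/
def WStarClusterPts (u : ℕ → (X →L[ℝ] ℝ) →L[ℝ] ℝ) : Set ((X →L[ℝ] ℝ) →L[ℝ] ℝ) :=
  { z | MapClusterPt (StrongDual.toWeakDual (𝕜 := ℝ) z) atTop
      (fun n => StrongDual.toWeakDual (𝕜 := ℝ) (u n)) }

def wckQ (A : Set X) : ℝ :=
  sSup { r | ∃ x : ℕ → X, (∀ n, x n ∈ A) ∧
    r = sInf { s | ∃ z ∈ WStarClusterPts X (fun n => inclusionInDoubleDual ℝ X (x n)),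
      ∃ v : X, s = ‖z - inclusionInDoubleDual ℝ X v‖ } }

/-!
If `X` is reflexive, Banach–Alaoglu in `X**` gives a bounded sequence `(x n)` a weak cluster
point `v`, which by Hahn–Banach lies in the closed convex hull of every tail; picking successive
blocks whose convex combinations are close to `v` gives convex block sequences of arbitrarily
small oscillation.

If `X` is not reflexive, its image in `X**` is a proper closed subspace, so there are `Φ ∈ X**`
and `Ψ ∈ X***`, both of norm `< 1`, with `Ψ` vanishing on `X` and `Ψ Φ = 1/2`. Applying Helly's theorem
alternately to `Ψ` and to `Φ` builds James' sequences `x n ∈ B_X`, `f k ∈ B_X*` with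
`f k (x n) = 1/2` for `k ≤ n` and `f k (x n) = 0` for `n < k`. For a convex block sequence `z` of
`x` with block boundaries `k`, the functional `f (k (n + 1))` is `0` on `z n` and `1/2` on
`z (n + 1)`, so `ca z ≥ 1/2`.
-/

section CaSeq

variable {E : Type*} [NormedAddCommGroup E]

theorem caSeq_nonneg (z : ℕ → E) : 0 ≤ caSeq z :=
  Real.iInf_nonneg fun _ => Real.sSup_nonneg <| by
    rintro _ ⟨k, -, l, -, rfl⟩
    exact norm_nonneg _

theorem caSeq_le_of_forall_norm_sub_le {z : ℕ → E} {N : ℕ} {ε : ℝ}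
    (h : ∀ k ≥ N, ∀ l ≥ N, ‖z k - z l‖ ≤ ε) : caSeq z ≤ ε := by
  refine ciInf_le_of_le ⟨0, ?_⟩ N (csSup_le ⟨_, N, le_rfl, N, le_rfl, rfl⟩ ?_)
  · rintro _ ⟨n, rfl⟩
    exact Real.sSup_nonneg fun _ ⟨k, _, l, _, hr⟩ => hr ▸ norm_nonneg _
  · rintro _ ⟨k, hk, l, hl, rfl⟩
    exact h k hk l hl

theorem le_caSeq_of_forall_le_norm_succ_sub {z : ℕ → E} {R c : ℝ} (hz : ∀ n, ‖z n‖ ≤ R)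
    (h : ∀ n, c ≤ ‖z (n + 1) - z n‖) : c ≤ caSeq z := by
  refine le_ciInf fun n =>
    (h n).trans (le_csSup ⟨R + R, ?_⟩ ⟨n + 1, n.le_succ, n, le_rfl, rfl⟩)
  rintro _ ⟨k, -, l, -, rfl⟩
  exact (norm_sub_le _ _).trans (add_le_add (hz k) (hz l))

end CaSeq

section

variable {E : Type*} [NormedAddCommGroup E] [NormedSpace ℝ E]

theorem IsConvexBlock.refl (x : ℕ → E) : IsConvexBlock x x :=
  ⟨id, rfl, strictMono_id, fun n => subset_convexHull ℝ _ ⟨n, ⟨le_rfl, n.lt_succ_self⟩, rfl⟩⟩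

theorem IsConvexBlock.norm_le {x z : ℕ → E} {R : ℝ} (hx : ∀ n, ‖x n‖ ≤ R)
    (hz : IsConvexBlock x z) (n : ℕ) : ‖z n‖ ≤ R := by
  obtain ⟨k, -, -, hmem⟩ := hz
  have hsub : x '' Ico (k n) (k (n + 1)) ⊆ closedBall 0 R := by
    rintro _ ⟨m, -, rfl⟩
    exact mem_closedBall_zero_iff.2 (hx m)
  exact mem_closedBall_zero_iff.1 (convexHull_min hsub (convex_closedBall 0 R) (hmem n))

theorem exists_isConvexBlock_forall_mem {x : ℕ → E} {S : Set E}
    (h : ∀ N, ∃ M, N < M ∧ (convexHull ℝ (x '' Ico N M) ∩ S).Nonempty) :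
    ∃ z, IsConvexBlock x z ∧ ∀ n, z n ∈ S := by
  choose M hNM y hy using h
  let k : ℕ → ℕ := fun n => Nat.rec 0 (fun _ m => M m) n
  exact ⟨fun n => y (k n), ⟨k, rfl, strictMono_nat_of_lt_succ fun n => hNM (k n),
    fun n => (hy (k n)).1⟩, fun n => (hy (k n)).2⟩

theorem convexHull_image_Ici_subset (x : ℕ → E) (N : ℕ) :
    convexHull ℝ (x '' Ici N) ⊆ ⋃ M, convexHull ℝ (x '' Ico N (N + M + 1)) := by
  have hmono : Monotone fun M => convexHull ℝ (x '' Ico N (N + M + 1)) := fun M M' hM =>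
    convexHull_mono (image_mono (Ico_subset_Ico_right (by omega)))
  refine convexHull_min ?_ (hmono.directed_le.convex_iUnion fun M => convex_convexHull ℝ _)
  rintro _ ⟨n, hn, rfl⟩
  exact mem_iUnion.2 ⟨n, subset_convexHull ℝ _ ⟨n, ⟨hn, by omega⟩, rfl⟩⟩

theorem exists_isConvexBlock_forall_mem_ball {x : ℕ → E} {v : E}
    (hv : ∀ N, v ∈ closure (convexHull ℝ (x '' Ici N))) {ε : ℝ} (hε : 0 < ε) :
    ∃ z, IsConvexBlock x z ∧ ∀ n, z n ∈ ball v ε := by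
  refine exists_isConvexBlock_forall_mem fun N => ?_
  obtain ⟨y, hy, hyv⟩ := Metric.mem_closure_iff.1 (hv N) ε hε
  obtain ⟨M, hM⟩ := mem_iUnion.1 (convexHull_image_Ici_subset x N hy)
  exact ⟨N + M + 1, by omega, y, hM, mem_ball'.2 hyv⟩

def caBlockInf (x : ℕ → E) : ℝ :=
  sInf { s | ∃ z, IsConvexBlock x z ∧ s = caSeq z }

theorem caBlockInf_nonneg (x : ℕ → E) : 0 ≤ caBlockInf x :=
  Real.sInf_nonneg fun _ ⟨z, _, hs⟩ => hs ▸ caSeq_nonneg z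

theorem caBlockInf_le {x z : ℕ → E} (hz : IsConvexBlock x z) : caBlockInf x ≤ caSeq z :=
  csInf_le ⟨0, fun _ ⟨z, _, hs⟩ => hs ▸ caSeq_nonneg z⟩ ⟨z, hz, rfl⟩

theorem le_caBlockInf {x : ℕ → E} {c : ℝ} (h : ∀ z, IsConvexBlock x z → c ≤ caSeq z) :
    c ≤ caBlockInf x :=
  le_csInf ⟨_, x, IsConvexBlock.refl x, rfl⟩ fun _ ⟨z, hz, hs⟩ => hs ▸ h z hz

theorem caBlockInf_le_two {x : ℕ → E} (hx : ∀ n, ‖x n‖ ≤ 1) : caBlockInf x ≤ 2 :=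
  (caBlockInf_le (IsConvexBlock.refl x)).trans <|
    caSeq_le_of_forall_norm_sub_le (N := 0) fun k _ l _ =>
      (norm_sub_le _ _).trans (by linarith [hx k, hx l])

theorem RQ_eq_zero_iff : RQ E = 0 ↔ ∀ x : ℕ → E, (∀ n, ‖x n‖ ≤ 1) → caBlockInf x = 0 := by
  have hRQ : RQ E = sSup { r | ∃ x : ℕ → E, (∀ n, ‖x n‖ ≤ 1) ∧ r = caBlockInf x } := by
    simp only [RQ, mem_closedBall_zero_iff, caBlockInf]
  have hbdd : BddAbove { r | ∃ x : ℕ → E, (∀ n, ‖x n‖ ≤ 1) ∧ r = caBlockInf x } :=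
    ⟨2, fun _ ⟨x, hx, hr⟩ => hr ▸ caBlockInf_le_two hx⟩
  rw [hRQ]
  constructor
  · intro h x hx
    exact le_antisymm (h ▸ le_csSup hbdd ⟨x, hx, rfl⟩) (caBlockInf_nonneg x)
  · intro h
    refine le_antisymm (csSup_le ⟨0, 0, fun _ => by simp, (h 0 fun _ => by simp).symm⟩ ?_)
      (Real.sSup_nonneg fun _ ⟨x, _, hr⟩ => hr ▸ caBlockInf_nonneg x)
    rintro _ ⟨x, hx, rfl⟩
    exact (h x hx).le

theorem mem_closure_convexHull_image_Ici {x : ℕ → E} {v : E}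
    (hv : ∀ f : StrongDual ℝ E, MapClusterPt (f v) atTop fun n => f (x n)) (N : ℕ) :
    v ∈ closure (convexHull ℝ (x '' Ici N)) := by
  by_contra hvN
  obtain ⟨f, c, hfv, hfC⟩ := geometric_hahn_banach_point_closed
    (convex_convexHull ℝ _).closure isClosed_closure hvN
  obtain ⟨n, hn, hfn⟩ := frequently_atTop.1
    (mapClusterPt_iff_frequently.1 (hv f) (Iio c) (Iio_mem_nhds hfv)) N
  exact (hfC _ (subset_closure (subset_convexHull ℝ _ ⟨n, hn, rfl⟩))).not_gt hfn

theorem exists_mapClusterPt_of_surjective (hJ : Function.Surjective (inclusionInDoubleDual ℝ E))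
    {x : ℕ → E} {R : ℝ} (hx : ∀ n, ‖x n‖ ≤ R) :
    ∃ v : E, ∀ f : StrongDual ℝ E, MapClusterPt (f v) atTop fun n => f (x n) := by
  let u : ℕ → WeakDual ℝ (StrongDual ℝ E) := fun n =>
    StrongDual.toWeakDual (inclusionInDoubleDual ℝ E (x n))
  have hu : map u atTop ≤ 𝓟 (WeakDual.toStrongDual ⁻¹' closedBall 0 R) :=
    le_principal_iff.2 <| mem_map.2 <| Eventually.of_forall fun n =>
      (mem_closedBall_zero_iff (E := StrongDual ℝ (StrongDual ℝ E))).2 <|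
        (double_dual_bound ℝ E (x n)).trans (hx n)
  obtain ⟨Φ, -, hΦ⟩ := (WeakDual.isCompact_closedBall 0 R).exists_mapClusterPt hu
  obtain ⟨v, hv⟩ := hJ (WeakDual.toStrongDual Φ)
  refine ⟨v, fun f => ?_⟩
  have hfv : f v = Φ f := by rw [← dual_def ℝ E v f, hv]; rfl
  exact hfv ▸ hΦ.continuousAt_comp (WeakDual.eval_continuous f).continuousAt

theorem caBlockInf_eq_zero_of_surjective
    (hJ : Function.Surjective (inclusionInDoubleDual ℝ E)) {x : ℕ → E} {R : ℝ}
    (hx : ∀ n, ‖x n‖ ≤ R) : caBlockInf x = 0 := by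
  obtain ⟨v, hv⟩ := exists_mapClusterPt_of_surjective hJ hx
  refine le_antisymm (le_of_forall_pos_le_add fun ε hε => ?_) (caBlockInf_nonneg x)
  obtain ⟨z, hz, hzv⟩ :=
    exists_isConvexBlock_forall_mem_ball (mem_closure_convexHull_image_Ici hv) (half_pos hε)
  refine (caBlockInf_le hz).trans (caSeq_le_of_forall_norm_sub_le (N := 0) fun k _ l _ => ?_)
  calc ‖z k - z l‖ ≤ dist (z k) v + dist (z l) v := by
        rw [← dist_eq_norm]; exact dist_triangle_right _ _ _
    _ ≤ 0 + ε := by linarith [mem_ball.1 (hzv k), mem_ball.1 (hzv l)]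

theorem exists_apply_eq_bidual (Φ : StrongDual ℝ (StrongDual ℝ E))
    (s : Finset (StrongDual ℝ E)) : ∃ x : E, ∀ g ∈ s, g x = Φ g := by
  classical
  let T : E →ₗ[ℝ] (s → ℝ) := LinearMap.pi fun g => (g.1 : E →ₗ[ℝ] ℝ)
  suffices (fun g : s => Φ g) ∈ LinearMap.range T by
    obtain ⟨x, hx⟩ := this
    exact ⟨x, fun g hg => congrFun hx ⟨g, hg⟩⟩
  by_contra hc
  obtain ⟨a, hac, haT⟩ := Submodule.exists_dual_map_eq_bot_of_notMem hc inferInstance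
  let h : StrongDual ℝ E := ∑ g : s, a (fun g' => if g = g' then 1 else 0) • g.1
  have hh : h = 0 := by
    ext x
    have : a (T x) = 0 := LinearMap.le_ker_iff_map.2 haT (LinearMap.mem_range_self T x)
    rw [LinearMap.pi_apply_eq_sum_univ] at this
    simpa [h, T, mul_comm] using this
  apply hac
  rw [LinearMap.pi_apply_eq_sum_univ]
  simpa [h, mul_comm] using congrArg Φ hh

theorem Submodule.exists_dual_vanishing_apply_eq_norm_mk (S : Submodule ℝ E) (m : E) :
    ∃ q : StrongDual ℝ E, ‖q‖ ≤ 1 ∧ (∀ y ∈ S, q y = 0) ∧ q m = ‖S.mkQ m‖ := by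
  obtain ⟨G, hG, hGm⟩ := exists_dual_vector'' ℝ (S.mkQ m)
  refine ⟨G.comp S.mkQL, ContinuousLinearMap.opNorm_le_bound _ zero_le_one fun y => ?_,
    fun y hy => ?_, hGm⟩
  · calc ‖G (S.mkQ y)‖ ≤ ‖G‖ * ‖S.mkQ y‖ := G.le_opNorm _
      _ ≤ 1 * ‖y‖ := by gcongr; exact Submodule.Quotient.norm_mk_le S y
  · simp [(Submodule.Quotient.mk_eq_zero S).2 hy]

theorem exists_apply_eq_bidual_norm_lt (Φ : StrongDual ℝ (StrongDual ℝ E))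
    (s : Finset (StrongDual ℝ E)) {ε : ℝ} (hε : 0 < ε) :
    ∃ x : E, (∀ g ∈ s, g x = Φ g) ∧ ‖x‖ < ‖Φ‖ + ε := by
  obtain ⟨x₀, hx₀⟩ := exists_apply_eq_bidual Φ s
  let K : Submodule ℝ E := ⨅ g : s, LinearMap.ker (g.1 : E →ₗ[ℝ] ℝ)
  obtain ⟨q, hq, hqK, hqx₀⟩ := K.exists_dual_vanishing_apply_eq_norm_mk x₀
  -- `q` vanishes on `K`, hence is a combination of the `g ∈ s`, on which `x₀` and `Φ` agree
  have hqspan : (q : E →ₗ[ℝ] ℝ) ∈ Submodule.span ℝ (range fun g : s => (g.1 : E →ₗ[ℝ] ℝ)) :=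
    mem_span_of_iInf_ker_le_ker fun y hy => hqK y hy
  obtain ⟨c, hc⟩ := (Submodule.mem_span_range_iff_exists_fun ℝ).1 hqspan
  have hqsum : q = ∑ g : s, c g • g.1 := ContinuousLinearMap.coe_injective (by simp [← hc])
  have hqΦ : q x₀ = Φ q := by
    simp [hqsum, map_sum, hx₀ _ (Finset.coe_mem _)]
  have hK : ‖K.mkQ x₀‖ ≤ ‖Φ‖ := by
    calc ‖K.mkQ x₀‖ = Φ q := hqx₀.symm.trans hqΦ
      _ ≤ ‖Φ‖ * ‖q‖ := (le_abs_self _).trans (Φ.le_opNorm q)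
      _ ≤ ‖Φ‖ := mul_le_of_le_one_right (by positivity) hq
  obtain ⟨x, hx, hxε⟩ := Submodule.Quotient.norm_mk_lt (K.mkQ x₀) hε
  have hxK : x - x₀ ∈ K := (Submodule.Quotient.eq K).1 hx
  refine ⟨x, fun g hg => ?_, hxε.trans_le (by linarith)⟩
  have := (Submodule.mem_iInf _).1 hxK ⟨g, hg⟩
  rw [LinearMap.mem_ker, map_sub, sub_eq_zero] at this
  exact this.trans (hx₀ g hg)

theorem Submodule.exists_dual_vanishing_apply_eq_half {F : Submodule ℝ E}
    (hF : IsClosed (F : Set E)) {m₀ : E} (hm₀ : m₀ ∉ F) :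
    ∃ (Φ : E) (Ψ : StrongDual ℝ E), ‖Φ‖ < 1 ∧ ‖Ψ‖ < 1 ∧ Ψ Φ = 1 / 2 ∧ ∀ y ∈ F, Ψ y = 0 := by
  set d := ‖F.mkQ m₀‖
  have hd : 0 < d := (norm_nonneg _).lt_of_ne' fun h =>
    hm₀ <| hF.closure_subset <| QuotientAddGroup.norm_mk_eq_zero_iff_mem_closure.1 h
  obtain ⟨m, hm, hmd⟩ := Submodule.Quotient.norm_mk_lt (F.mkQ m₀) (show 0 < d / 4 by positivity)
  obtain ⟨q, hq, hqF, hqm⟩ := F.exists_dual_vanishing_apply_eq_norm_mk m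
  rw [Submodule.mkQ_apply, hm] at hqm
  refine ⟨(3 / (5 * d)) • m, (5 / 6 : ℝ) • q, ?_, ?_, ?_, fun y hy => by simp [hqF y hy]⟩
  · rw [norm_smul, Real.norm_of_nonneg (by positivity)]
    calc 3 / (5 * d) * ‖m‖ ≤ 3 / (5 * d) * (d + d / 4) := by gcongr
      _ < 1 := by field_simp; linarith
  · rw [norm_smul, Real.norm_of_nonneg (by positivity)]
    linarith
  · simp only [smul_apply, map_smul, hqm, smul_eq_mul]
    field_simp
    ring

theorem exists_james_step {Φ : StrongDual ℝ (StrongDual ℝ E)} (hΦ : ‖Φ‖ < 1)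
    (hf : ∀ s : Finset E, ∃ f : StrongDual ℝ E, ‖f‖ ≤ 1 ∧ Φ f = 1 / 2 ∧ ∀ y ∈ s, f y = 0)
    (t : Finset (E × StrongDual ℝ E)) (ht : ∀ a ∈ t, Φ a.2 = 1 / 2) :
    ∃ b : E × StrongDual ℝ E, (‖b.1‖ ≤ 1 ∧ ‖b.2‖ ≤ 1 ∧ Φ b.2 = 1 / 2 ∧ b.2 b.1 = 1 / 2) ∧
      ∀ a ∈ t, b.2 a.1 = 0 ∧ a.2 b.1 = 1 / 2 := by
  classical
  obtain ⟨f, hf₁, hfΦ, hft⟩ := hf (t.image Prod.fst)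
  obtain ⟨y, hy, hy₁⟩ := exists_apply_eq_bidual_norm_lt Φ (insert f (t.image Prod.snd))
    (sub_pos.2 hΦ)
  refine ⟨(y, f), ⟨by linarith, hf₁, hfΦ, ?_⟩, fun a ha => ⟨?_, ?_⟩⟩
  · exact (hy f (Finset.mem_insert_self _ _)).trans hfΦ
  · exact hft _ (Finset.mem_image_of_mem _ ha)
  · exact (hy _ (Finset.mem_insert_of_mem (Finset.mem_image_of_mem _ ha))).trans (ht a ha)

theorem exists_james_sequences_of_not_surjective [CompleteSpace E]
    (hJ : ¬Function.Surjective (inclusionInDoubleDual ℝ E)) :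
    ∃ (x : ℕ → E) (f : ℕ → StrongDual ℝ E), (∀ n, ‖x n‖ ≤ 1) ∧ (∀ n, ‖f n‖ ≤ 1) ∧
      (∀ k n, k ≤ n → f k (x n) = 1 / 2) ∧ (∀ k n, n < k → f k (x n) = 0) := by
  classical
  let J := inclusionInDoubleDual ℝ E
  let F := LinearMap.range (J : E →ₗ[ℝ] StrongDual ℝ (StrongDual ℝ E))
  have hF : IsClosed (F : Set (StrongDual ℝ (StrongDual ℝ E))) := by
    rw [LinearMap.coe_range]
    exact (inclusionInDoubleDualLi ℝ (E := E)).isometry.isUniformInducing.isComplete_range.isClosed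
  obtain ⟨Φ₀, hΦ₀⟩ := not_forall.1 hJ
  have hΦ₀F : Φ₀ ∉ F := by rintro ⟨y, rfl⟩; exact hΦ₀ ⟨y, rfl⟩
  obtain ⟨Φ, Ψ, hΦ, hΨ, hΨΦ, hΨF⟩ := Submodule.exists_dual_vanishing_apply_eq_half (m₀ := Φ₀) hF hΦ₀F
  have hf (s : Finset E) : ∃ f : StrongDual ℝ E, ‖f‖ ≤ 1 ∧ Φ f = 1 / 2 ∧ ∀ y ∈ s, f y = 0 := by
    obtain ⟨f, hf, hf₁⟩ :=
      exists_apply_eq_bidual_norm_lt Ψ (insert Φ (s.image J)) (sub_pos.2 hΨ)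
    refine ⟨f, by linarith, (hf Φ (Finset.mem_insert_self _ _)).trans hΨΦ, fun y hy => ?_⟩
    exact (hf _ (Finset.mem_insert_of_mem (Finset.mem_image_of_mem J hy))).trans
      (hΨF _ ⟨y, rfl⟩)
  obtain ⟨p, hp, hpp⟩ := exists_seq_of_forall_finset_exists
    (fun b : E × StrongDual ℝ E => ‖b.1‖ ≤ 1 ∧ ‖b.2‖ ≤ 1 ∧ Φ b.2 = 1 / 2 ∧ b.2 b.1 = 1 / 2)
    (fun a b => b.2 a.1 = 0 ∧ a.2 b.1 = 1 / 2)
    fun t ht => exists_james_step hΦ hf t fun a ha => (ht a ha).2.2.1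
  refine ⟨fun n => (p n).1, fun n => (p n).2, fun n => (hp n).1, fun n => (hp n).2.1,
    fun k n hkn => ?_, fun k n hnk => (hpp n k hnk).1⟩
  rcases hkn.lt_or_eq with hlt | rfl
  · exact (hpp k n hlt).2
  · exact (hp k).2.2.2

theorem apply_eq_of_mem_convexHull (f : StrongDual ℝ E) {S : Set E} {c : ℝ}
    (h : ∀ y ∈ S, f y = c) {w : E} (hw : w ∈ convexHull ℝ S) : f w = c :=
  convexHull_min h (convex_hyperplane f.isLinear c) hw

theorem half_le_caSeq_of_james {x : ℕ → E} {f : ℕ → StrongDual ℝ E} (hx : ∀ n, ‖x n‖ ≤ 1)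
    (hf : ∀ n, ‖f n‖ ≤ 1) (hle : ∀ k n, k ≤ n → f k (x n) = 1 / 2)
    (hlt : ∀ k n, n < k → f k (x n) = 0) {z : ℕ → E} (hz : IsConvexBlock x z) :
    1 / 2 ≤ caSeq z := by
  refine le_caSeq_of_forall_le_norm_succ_sub (hz.norm_le hx) fun n => ?_
  obtain ⟨k, -, -, hmem⟩ := hz
  have h₀ : f (k (n + 1)) (z n) = 0 :=
    apply_eq_of_mem_convexHull _ (by rintro _ ⟨m, hm, rfl⟩; exact hlt _ m hm.2) (hmem n)
  have h₁ : f (k (n + 1)) (z (n + 1)) = 1 / 2 :=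
    apply_eq_of_mem_convexHull _ (by rintro _ ⟨m, hm, rfl⟩; exact hle _ m hm.1) (hmem (n + 1))
  calc 1 / 2 = f (k (n + 1)) (z (n + 1) - z n) := by rw [map_sub, h₀, h₁, sub_zero]
    _ ≤ ‖f (k (n + 1))‖ * ‖z (n + 1) - z n‖ := (le_abs_self _).trans ((f _).le_opNorm _)
    _ ≤ ‖z (n + 1) - z n‖ := mul_le_of_le_one_left (norm_nonneg _) (hf _)

theorem exists_half_le_caBlockInf_of_not_surjective [CompleteSpace E]
    (hJ : ¬Function.Surjective (inclusionInDoubleDual ℝ E)) :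
    ∃ x : ℕ → E, (∀ n, ‖x n‖ ≤ 1) ∧ 1 / 2 ≤ caBlockInf x := by
  obtain ⟨x, f, hx, hf, hle, hlt⟩ := exists_james_sequences_of_not_surjective hJ
  exact ⟨x, hx, le_caBlockInf fun z hz => half_le_caSeq_of_james hx hf hle hlt hz⟩

end

theorem stmt13 {X : Type*} [NormedAddCommGroup X] [NormedSpace ℝ X] [CompleteSpace X] :
    Function.Surjective (inclusionInDoubleDual ℝ X) ↔ RQ X = 0 := by
  rw [RQ_eq_zero_iff]
  refine ⟨fun hJ x hx => caBlockInf_eq_zero_of_surjective hJ hx, fun h => ?_⟩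
  by_contra hJ
  obtain ⟨x, hx, hhalf⟩ := exists_half_le_caBlockInf_of_not_surjective hJ
  linarith [h x hx]
end
end

section
/- Let X be a Banach space containing no subspace isomorphic to ℓ₁, and let (f_n) be a weak* null sequence in X*. Then limsup_n ‖f_n‖ ≤ 2β((f_n)), where β((f_n)) = sup over weakly null sequences (x_n) in B_X of limsup_n |⟨f_n, x_n⟩|. -/
open Filter Topology Metric Set NormedSpace

noncomputable section

variable (X : Type*) [NormedAddCommGroup X] [NormedSpace ℝ X]

variable {X}

variable (X)

instance : Fact ((1 : ENNReal) ≤ 1) := ⟨le_rfl⟩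


/-!
Let `L = limsup ‖f n‖` and `ε > 0`. Pick `n_k` and unit vectors `x_k` with `f_{n_k} (x_k) > L - ε`.
By Rosenthal's `ℓ₁` theorem we may assume `(x_k)` weakly Cauchy, and since `f_n → 0` weak* we may
thin out further so that `|f_{n_{k+1}} (x_k)| < ε`. The half-differences `(x_{k+1} - x_k) / 2` are
then weakly null in the unit ball and `f_{n_{k+1}}` is larger than `(L - 2ε) / 2` on them, so
`β ≥ (L - 2ε) / 2`.

Rosenthal's theorem comes from his dichotomy for a sequence of pairs of sets `(A n, B n)`: either
along some subsequence no point lies in infinitely many `A n` and infinitely many `B n`, or some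
subsequence is Boolean independent. The dichotomy is the Nash-Williams (Galvin–Prikry) theorem for
open families of finite sets, applied to the finite sets along which some point alternates between
the `A`'s and the `B`'s. For `A n = {g | g (x n) < p}` and `B n = {g | q < g (x n)}` with `‖g‖ ≤ 1`,
an independent subsequence of `(x n)` spans a copy of `ℓ₁`.
-/

lemma Set.Infinite.inter_Ioi {N : Set ℕ} (hN : N.Infinite) (n : ℕ) : (N ∩ Ioi n).Infinite := by
  simpa [sdiff_eq, compl_Iic] using hN.sdiff (finite_Iic n)

lemma exists_seq_of_forall_exists {α : Sort*} {R : ℕ → α → α → Prop} (a₀ : α)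
    (h : ∀ k a, ∃ b, R k a b) : ∃ F : ℕ → α, F 0 = a₀ ∧ ∀ k, R k (F k) (F (k + 1)) := by
  choose step hstep using h
  exact ⟨fun k => Nat.rec a₀ step k, rfl, fun k => hstep _ _⟩

lemma exists_strictMono_forall_mem {C : ℕ → Set ℕ} (hC : ∀ k, (C k).Infinite) :
    ∃ e : ℕ → ℕ, StrictMono e ∧ ∀ k, e k ∈ C k := by
  obtain ⟨a₀, ha₀⟩ := (hC 0).nonempty
  obtain ⟨e, he0, he⟩ := exists_seq_of_forall_exists a₀ fun k a => (hC (k + 1)).exists_gt a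
  refine ⟨e, strictMono_nat_of_lt_succ fun k => (he k).2, fun k => ?_⟩
  cases k with
  | zero => exact he0 ▸ ha₀
  | succ k => exact (he k).1

section Fusion

variable {n : ℕ → ℕ} {A : ℕ → Set ℕ}

lemma strictMono_of_nested (hmem : ∀ i, n (i + 1) ∈ A i) (hgt : ∀ i, A i ⊆ Ioi (n i)) :
    StrictMono n :=
  strictMono_nat_of_lt_succ fun i => hgt i (hmem i)

lemma mem_of_nested (hmem : ∀ i, n (i + 1) ∈ A i) (hsub : ∀ i, A (i + 1) ⊆ A i) {i j : ℕ}
    (hij : i < j) : n j ∈ A i := by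
  obtain ⟨k, rfl⟩ := Nat.exists_eq_add_of_lt hij
  exact antitone_nat_of_succ_le hsub (Nat.le_add_right i k) (hmem (i + k))

lemma exists_fusion_seq {M : Set ℕ} (hM : M.Infinite) {Φ : ℕ → Set ℕ → Prop}
    (h : ∀ A ⊆ M, A.Infinite → ∃ a ∈ A, ∃ A' ⊆ A ∩ Ioi a, A'.Infinite ∧ Φ a A') :
    ∃ (n : ℕ → ℕ) (A : ℕ → Set ℕ), StrictMono n ∧ range n ⊆ M ∧ (∀ i, Φ (n i) (A i)) ∧
      ∀ i j, i < j → n j ∈ A i := by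
  let St := {p : ℕ × Set ℕ // p.1 ∈ M ∧ p.2 ⊆ M ∩ Ioi p.1 ∧ p.2.Infinite ∧ Φ p.1 p.2}
  have step : ∀ A ⊆ M, A.Infinite → ∃ p : St, p.1.1 ∈ A ∧ p.1.2 ⊆ A := by
    intro A hAM hA
    obtain ⟨a, ha, A', hA', hinf, hΦ⟩ := h A hAM hA
    exact ⟨⟨(a, A'), hAM ha, hA'.trans (inter_subset_inter_left _ hAM), hinf, hΦ⟩, ha,
      hA'.trans inter_subset_left⟩
  obtain ⟨p₀, -⟩ := step M subset_rfl hM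
  obtain ⟨F, -, hF⟩ := exists_seq_of_forall_exists p₀ fun _ p =>
    step p.1.2 (p.2.2.1.trans inter_subset_left) p.2.2.2.1
  refine ⟨fun i => (F i).1.1, fun i => (F i).1.2,
    strictMono_of_nested (fun i => (hF i).1) fun i => (F i).2.2.1.trans inter_subset_right,
    range_subset_iff.2 fun i => (F i).2.1, fun i => (F i).2.2.2.2,
    fun _ _ => mem_of_nested (n := fun i => (F i).1.1) (A := fun i => (F i).1.2)
      (fun i => (hF i).1) fun i => (hF i).2⟩

end Fusion

namespace NashWilliams

def IsInitialSegment (t : Finset ℕ) (N : Set ℕ) : Prop :=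
  ↑t ⊆ N ∧ ∀ a ∈ N, ∀ b ∈ t, a ≤ b → a ∈ t

lemma isInitialSegment_empty (N : Set ℕ) : IsInitialSegment ∅ N := by
  simp [IsInitialSegment]

lemma IsInitialSegment.insert_sInf {t : Finset ℕ} {N : Set ℕ} (hN : N.Nonempty)
    (ht : IsInitialSegment t (N ∩ Ioi (sInf N))) : IsInitialSegment (insert (sInf N) t) N := by
  refine ⟨?_, fun a ha b hb hab => ?_⟩
  · rw [Finset.coe_insert]
    exact insert_subset (Nat.sInf_mem hN) (ht.1.trans inter_subset_left)
  · rcases (Nat.sInf_le ha).eq_or_lt with rfl | hlt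
    · exact Finset.mem_insert_self _ _
    · rcases Finset.mem_insert.mp hb with rfl | hb
      · exact absurd hab hlt.not_ge
      · exact Finset.mem_insert_of_mem (ht.2 a ⟨ha, hlt⟩ b hb hab)

lemma IsInitialSegment.card_filter_lt {e : ℕ → ℕ} (he : StrictMono e) {t : Finset ℕ}
    (ht : IsInitialSegment t (range e)) {i : ℕ} (hi : e i ∈ t) :
    (t.filter (· < e i)).card = i := by
  have : t.filter (· < e i) = (Finset.range i).image e := by
    ext b
    simp only [Finset.mem_filter, Finset.mem_image, Finset.mem_range]
    constructor
    · rintro ⟨hb, hlt⟩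
      obtain ⟨j, rfl⟩ := ht.1 hb
      exact ⟨j, he.lt_iff_lt.mp hlt, rfl⟩
    · rintro ⟨j, hj, rfl⟩
      exact ⟨ht.2 _ ⟨j, rfl⟩ _ hi (he hj).le, he hj⟩
  rw [this, Finset.card_image_of_injective _ he.injective, Finset.card_range]

variable (bad : Finset ℕ → Prop)

def Accepts (s : Finset ℕ) (M : Set ℕ) : Prop :=
  ∀ N ⊆ M, N.Infinite → ∃ t, IsInitialSegment t N ∧ bad (s ∪ t)

def Rejects (s : Finset ℕ) (M : Set ℕ) : Prop :=
  ∀ N ⊆ M, N.Infinite → ¬ Accepts bad s N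

variable {bad}

lemma accepts_of_bad {s : Finset ℕ} (h : bad s) (M : Set ℕ) : Accepts bad s M :=
  fun N _ _ => ⟨∅, isInitialSegment_empty N, by simpa using h⟩

lemma Rejects.mono {s : Finset ℕ} {M N : Set ℕ} (h : Rejects bad s M) (hNM : N ⊆ M) :
    Rejects bad s N :=
  fun N' hN' hinf => h N' (hN'.trans hNM) hinf

lemma Rejects.not_bad {s : Finset ℕ} {M : Set ℕ} (h : Rejects bad s M) (hM : M.Infinite) :
    ¬ bad s :=
  fun hs => h M subset_rfl hM (accepts_of_bad hs M)

lemma Rejects.exists_rejects_insert {s : Finset ℕ} {M : Set ℕ} (hM : M.Infinite)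
    (hrej : Rejects bad s M) :
    ∃ a ∈ M, ∃ M' ⊆ M ∩ Ioi a, M'.Infinite ∧ Rejects bad (insert a s) M' := by
  by_contra! hcon
  have hacc : ∀ A ⊆ M, A.Infinite →
      ∃ a ∈ A, ∃ A' ⊆ A ∩ Ioi a, A'.Infinite ∧ Accepts bad (insert a s) A' := by
    intro A hAM hA
    obtain ⟨a, ha⟩ := hA.nonempty
    have := hcon a (hAM ha) (A ∩ Ioi a) (inter_subset_inter_left _ hAM) (hA.inter_Ioi a)
    simp only [Rejects, not_forall, not_not] at this
    obtain ⟨A', hA', hinf, hacc⟩ := this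
    exact ⟨a, ha, A', hA', hinf, hacc⟩
  obtain ⟨n, A, hmono, hnM, hnA, hmem⟩ := exists_fusion_seq hM hacc
  -- the fusion sequence accepts `s`: an infinite subset starts with some `n i`, followed by a
  -- subset of `A i`
  refine hrej (range n) hnM (infinite_range_of_injective hmono.injective) fun N hN hNinf => ?_
  obtain ⟨i, hi⟩ := hN (Nat.sInf_mem hNinf.nonempty)
  have hsub : N ∩ Ioi (sInf N) ⊆ A i := by
    rintro _ ⟨hb, hlt⟩
    obtain ⟨j, rfl⟩ := hN hb
    exact hmem i j (hmono.lt_iff_lt.mp (hi ▸ hlt))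
  obtain ⟨t, ht, hbad⟩ := hnA i _ hsub (hNinf.inter_Ioi _)
  refine ⟨_, ht.insert_sInf hNinf.nonempty, ?_⟩
  rwa [Finset.union_insert, ← Finset.insert_union, ← hi]

lemma Rejects.exists_forall_rejects_insert {s : Finset ℕ} {M : Set ℕ} (hM : M.Infinite)
    (hrej : Rejects bad s M) :
    ∃ N ⊆ M, N.Infinite ∧ ∀ a ∈ N, Rejects bad (insert a s) (N ∩ Ioi a) := by
  obtain ⟨n, A, hmono, hnM, hnA, hmem⟩ := exists_fusion_seq hM fun A hAM hA =>
    (hrej.mono hAM).exists_rejects_insert hA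
  refine ⟨range n, hnM, infinite_range_of_injective hmono.injective, ?_⟩
  rintro _ ⟨i, rfl⟩
  refine (hnA i).mono ?_
  rintro _ ⟨⟨j, rfl⟩, hlt⟩
  exact hmem i j (hmono.lt_iff_lt.mp hlt)

lemma exists_forall_rejects_insert_of_finset (S : Finset (Finset ℕ)) {M : Set ℕ}
    (hM : M.Infinite) (h : ∀ s ∈ S, Rejects bad s M) :
    ∃ N ⊆ M, N.Infinite ∧ ∀ s ∈ S, ∀ a ∈ N, Rejects bad (insert a s) (N ∩ Ioi a) := by
  induction S using Finset.induction_on generalizing M with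
  | empty => exact ⟨M, subset_rfl, hM, by simp⟩
  | insert s S _ ih =>
    obtain ⟨N₁, hN₁M, hN₁, hrej₁⟩ := ih hM fun s' hs' => h s' (Finset.mem_insert_of_mem hs')
    obtain ⟨N₂, hN₂N₁, hN₂, hrej₂⟩ :=
      ((h s (Finset.mem_insert_self s S)).mono hN₁M).exists_forall_rejects_insert hN₁
    refine ⟨N₂, hN₂N₁.trans hN₁M, hN₂, fun s' hs' a ha => ?_⟩
    rcases Finset.mem_insert.mp hs' with rfl | hs'
    · exact hrej₂ a ha
    · exact (hrej₁ s' hs' a (hN₂N₁ ha)).mono (inter_subset_inter_left _ hN₂N₁)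

theorem nash_williams (bad : Finset ℕ → Prop) {M₀ : Set ℕ} (h₀ : M₀.Infinite) :
    (∃ M ⊆ M₀, M.Infinite ∧ Accepts bad ∅ M) ∨
      ∃ M ⊆ M₀, M.Infinite ∧ ∀ s : Finset ℕ, ↑s ⊆ M → ¬ bad s := by
  refine or_iff_not_imp_left.2 fun hacc => ?_
  have hrej : Rejects bad ∅ M₀ := fun N hN hNinf hN' => hacc ⟨N, hN, hNinf, hN'⟩
  -- fusion: `l k` collects the chosen points, and `A k` rejects every subset of `l k`
  let St := {p : Finset ℕ × Set ℕ //
    ↑p.1 ⊆ M₀ ∧ p.2 ⊆ M₀ ∧ p.2.Infinite ∧ ∀ s ⊆ p.1, Rejects bad s p.2}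
  have step : ∀ (k : ℕ) (p : St), ∃ q : St, (∃ a, k < a ∧ q.1.1 = insert a p.1.1) := by
    rintro k ⟨⟨l, A⟩, hl, hA, hAinf, hrejA⟩
    obtain ⟨N, hNA, hN, hrejN⟩ := exists_forall_rejects_insert_of_finset l.powerset hAinf
      fun s hs => hrejA s (Finset.mem_powerset.mp hs)
    obtain ⟨a, ha, hka⟩ := hN.exists_gt k
    refine ⟨⟨⟨insert a l, N ∩ Ioi a⟩, ?_, inter_subset_left.trans (hNA.trans hA),
      hN.inter_Ioi a, fun s hs => ?_⟩, a, hka, rfl⟩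
    · rw [Finset.coe_insert]
      exact insert_subset (hA (hNA ha)) hl
    · by_cases has : a ∈ s
      · rw [← Finset.insert_erase has]
        exact hrejN _ (Finset.mem_powerset.mpr (Finset.subset_insert_iff.mp hs)) a ha
      · exact (hrejA s ((Finset.subset_insert_iff_of_notMem has).mp hs)).mono
          (inter_subset_left.trans hNA)
  obtain ⟨F, -, hF⟩ := exists_seq_of_forall_exists
    (⟨(∅, M₀), by simp, subset_rfl, h₀, fun s hs => Finset.subset_empty.mp hs ▸ hrej⟩ : St) step
  have hmono : Monotone fun k => (F k).1.1 := monotone_nat_of_le_succ fun k => by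
    obtain ⟨a, -, h⟩ := hF k
    exact h ▸ Finset.subset_insert a _
  refine ⟨⋃ k, ↑(F k).1.1, iUnion_subset fun k => (F k).2.1,
    infinite_of_forall_exists_gt fun k => ?_, fun s hs => ?_⟩
  · obtain ⟨a, hka, h⟩ := hF k
    exact ⟨a, mem_iUnion.2 ⟨k + 1, by simp [h]⟩, hka⟩
  · obtain ⟨K, hK⟩ := (Monotone.directed_le fun i j hij => Finset.coe_subset.2 (hmono hij) :
      Directed (· ⊆ ·) fun k => (↑(F k).1.1 : Set ℕ)).exists_mem_subset_of_finset_subset_biUnion hs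
    exact ((F K).2.2.2.2 s (Finset.coe_subset.mp hK)).not_bad (F K).2.2.2.1

end NashWilliams

lemma Finset.filter_lt_insert_of_le {l : Finset ℕ} {a y : ℕ} (hay : a ≤ y) :
    (insert y l).filter (· < a) = l.filter (· < a) := by
  rw [Finset.filter_insert, if_neg hay.not_gt]

lemma Finset.filter_lt_insert_self {l : Finset ℕ} {y : ℕ} (hl : ∀ b ∈ l, b < y) :
    (insert y l).filter (· < y) = l := by
  rw [Finset.filter_insert, if_neg (lt_irrefl y), Finset.filter_true_of_mem hl]

namespace Rosenthal

open NashWilliams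

variable {S : Type*} (A B : ℕ → Set S)

/-- `(l.filter (· < a)).card` is the position of `a` in the increasing enumeration of `l`. -/
def Realizes (g : S) (l : Finset ℕ) : Prop :=
  ∀ a ∈ l, g ∈ if Even (l.filter (· < a)).card then A a else B a

variable {A B}

lemma not_infinite_and_infinite_of_accepts {M : Set ℕ}
    (hacc : Accepts (fun l => ¬ ∃ g, Realizes A B g l) ∅ M) (g : S) :
    ¬ ({n ∈ M | g ∈ A n}.Infinite ∧ {n ∈ M | g ∈ B n}.Infinite) := by
  rintro ⟨hA, hB⟩
  obtain ⟨e, he, heC⟩ := exists_strictMono_forall_mem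
    (C := fun k => {n ∈ M | g ∈ if Even k then A n else B n}) fun k => by
      by_cases hk : Even k <;> simpa [hk]
  obtain ⟨t, ht, hbad⟩ := hacc (range e) (range_subset_iff.2 fun k => (heC k).1)
    (infinite_range_of_injective he.injective)
  refine hbad ⟨g, fun a ha => ?_⟩
  obtain ⟨i, rfl⟩ := ht.1 (Finset.empty_union t ▸ ha)
  simpa [ht.card_filter_lt he (Finset.empty_union t ▸ ha)] using (heC i).2

lemma exists_extension_with_parity {l : Finset ℕ} {c x : ℕ} (hl : ∀ b ∈ l, b < c) (hcx : c < x)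
    (Q : Prop) :
    ∃ l', l ⊆ l' ∧ x ∈ l' ∧ ↑l' ⊆ insert x (insert c (↑l : Set ℕ)) ∧
      (∀ a ≤ c, l'.filter (· < a) = l.filter (· < a)) ∧ (Even (l'.filter (· < x)).card ↔ Q) := by
  have hlx : ∀ b ∈ l, b < x := fun b hb => (hl b hb).trans hcx
  by_cases h : (Even l.card ↔ Q)
  · refine ⟨insert x l, Finset.subset_insert _ _, Finset.mem_insert_self _ _, ?_,
      fun a ha => Finset.filter_lt_insert_of_le (ha.trans hcx.le), ?_⟩
    · rw [Finset.coe_insert]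
      exact insert_subset_insert (subset_insert _ _)
    · rwa [Finset.filter_lt_insert_self hlx]
  · refine ⟨insert x (insert c l), (Finset.subset_insert _ _).trans (Finset.subset_insert _ _),
      Finset.mem_insert_self _ _, by simp, fun a ha => ?_, ?_⟩
    · rw [Finset.filter_lt_insert_of_le (ha.trans hcx.le), Finset.filter_lt_insert_of_le ha]
    · rw [Finset.filter_lt_insert_self (by simpa [hcx] using hlx),
        Finset.card_insert_of_notMem fun hc => lt_irrefl c (hl c hc), Nat.even_add_one]
      tauto

/-- Padding with `u (2 * k)` puts `u (2 * k + 1)` at an even position for `k ∈ P` and at an odd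
position for `k ∈ Q`. -/
lemma exists_finset_pattern {u : ℕ → ℕ} (hu : StrictMono u) (P Q : Finset ℕ) (K : ℕ) :
    ∃ l : Finset ℕ, ↑l ⊆ u '' Iio (2 * K) ∧ ∀ k < K, k ∈ P ∪ Q →
      u (2 * k + 1) ∈ l ∧ (Even (l.filter (· < u (2 * k + 1))).card ↔ k ∈ P) := by
  induction K with
  | zero => exact ⟨∅, by simp, by simp⟩
  | succ K ih =>
    obtain ⟨l, hlu, hl⟩ := ih
    have hlu' : ↑l ⊆ u '' Iio (2 * (K + 1)) :=
      hlu.trans (image_mono (Iio_subset_Iio (by omega)))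
    by_cases hKPQ : K ∈ P ∪ Q
    swap
    · refine ⟨l, hlu', fun k hk hkPQ => ?_⟩
      rcases Nat.lt_succ_iff_lt_or_eq.mp hk with hk | rfl
      exacts [hl k hk hkPQ, absurd hkPQ hKPQ]
    have hlt : ∀ b ∈ l, b < u (2 * K) := fun b hb => by
      obtain ⟨j, hj, rfl⟩ := hlu hb
      exact hu hj
    obtain ⟨l', hll', hxl', hl'l, hfilter, hpar⟩ :=
      exists_extension_with_parity hlt (hu (Nat.lt_succ_self _)) (K ∈ P)
    refine ⟨l', hl'l.trans (insert_subset ⟨2 * K + 1, by simp; omega, rfl⟩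
      (insert_subset ⟨2 * K, by simp, rfl⟩ hlu')), fun k hk hkPQ => ?_⟩
    rcases Nat.lt_succ_iff_lt_or_eq.mp hk with hk | rfl
    · obtain ⟨hmem, hiff⟩ := hl k hk hkPQ
      exact ⟨hll' hmem, by rwa [hfilter _ (hu (by omega : 2 * k + 1 < 2 * K)).le]⟩
    · exact ⟨hxl', hpar⟩

lemma exists_independent_of_forall_realizes {M : Set ℕ} (hM : M.Infinite)
    (h : ∀ l : Finset ℕ, ↑l ⊆ M → ∃ g, Realizes A B g l) :
    ∃ m : ℕ → ℕ, StrictMono m ∧ range m ⊆ M ∧ ∀ P Q : Finset ℕ, Disjoint P Q →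
      ∃ g, (∀ k ∈ P, g ∈ A (m k)) ∧ ∀ k ∈ Q, g ∈ B (m k) := by
  set u := Nat.nth (· ∈ M)
  have hu : StrictMono u := Nat.nth_strictMono hM
  refine ⟨fun k => u (2 * k + 1), fun i j hij => hu (by omega),
    range_subset_iff.2 fun k => Nat.nth_mem_of_infinite hM _, fun P Q hPQ => ?_⟩
  obtain ⟨l, hlu, hl⟩ := exists_finset_pattern hu P Q ((P ∪ Q).sup id + 1)
  obtain ⟨g, hg⟩ := h l fun a ha => by
    obtain ⟨j, -, rfl⟩ := hlu ha
    exact Nat.nth_mem_of_infinite hM j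
  have hpos : ∀ k ∈ P ∪ Q, u (2 * k + 1) ∈ l ∧
      (Even (l.filter (· < u (2 * k + 1))).card ↔ k ∈ P) :=
    fun k hk => hl k (Nat.lt_succ_of_le (Finset.le_sup (f := id) hk)) hk
  refine ⟨g, fun k hk => ?_, fun k hk => ?_⟩
  · obtain ⟨hmem, hiff⟩ := hpos k (Finset.mem_union_left Q hk)
    simpa [hiff.mpr hk] using hg _ hmem
  · obtain ⟨hmem, hiff⟩ := hpos k (Finset.mem_union_right P hk)
    simpa [hiff.not.mpr (Finset.disjoint_right.mp hPQ hk)] using hg _ hmem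

theorem dichotomy (A B : ℕ → Set S) {M₀ : Set ℕ} (h₀ : M₀.Infinite) :
    (∃ M ⊆ M₀, M.Infinite ∧ ∀ g, ¬ ({n ∈ M | g ∈ A n}.Infinite ∧ {n ∈ M | g ∈ B n}.Infinite)) ∨
      ∃ m : ℕ → ℕ, StrictMono m ∧ range m ⊆ M₀ ∧ ∀ P Q : Finset ℕ, Disjoint P Q →
        ∃ g, (∀ k ∈ P, g ∈ A (m k)) ∧ ∀ k ∈ Q, g ∈ B (m k) := by
  rcases nash_williams (fun l => ¬ ∃ g, Realizes A B g l) h₀ with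
    ⟨M, hMM₀, hM, hacc⟩ | ⟨M, hMM₀, hM, hgood⟩
  · exact Or.inl ⟨M, hMM₀, hM, not_infinite_and_infinite_of_accepts hacc⟩
  · obtain ⟨m, hm, hmM, hind⟩ :=
      exists_independent_of_forall_realizes hM fun l hl => not_not.mp (hgood l hl)
    exact Or.inr ⟨m, hm, hmM.trans hMM₀, hind⟩

end Rosenthal

section EllOne

variable {E : Type*} [NormedAddCommGroup E] [NormedSpace ℝ E]

def ContainsEllOne (E : Type*) [NormedAddCommGroup E] [NormedSpace ℝ E] : Prop :=
  ∃ T : lp (fun _ : ℕ => ℝ) 1 →L[ℝ] E, ∃ c > (0 : ℝ), ∀ v, c * ‖v‖ ≤ ‖T v‖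

lemma lp_one_hasSum_norm (a : lp (fun _ : ℕ => ℝ) 1) : HasSum (fun k => ‖a k‖) ‖a‖ := by
  have hsum : Summable fun k => ‖a k‖ := by
    simpa using (lp.memℓp a).summable (p := 1) (by norm_num)
  rw [lp.norm_eq_tsum_rpow (by norm_num) a]
  simpa using hsum.hasSum

def IsIndependent (y : ℕ → E) (p q : ℝ) : Prop :=
  ∀ P Q : Finset ℕ, Disjoint P Q → ∃ g : E →L[ℝ] ℝ, ‖g‖ ≤ 1 ∧
    (∀ k ∈ P, g (y k) < p) ∧ ∀ k ∈ Q, q < g (y k)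

lemma IsIndependent.mul_sum_abs_le {y : ℕ → E} {p q : ℝ} (hind : IsIndependent y p q)
    (a : ℕ → ℝ) (F : Finset ℕ) :
    (q - p) * ∑ k ∈ F, |a k| ≤ 2 * ‖∑ k ∈ F, a k • y k‖ := by
  set P := F.filter (fun k => 0 ≤ a k)
  set Q := F.filter (fun k => ¬ 0 ≤ a k)
  have hPQ : Disjoint P Q := Finset.disjoint_filter_filter_not F F _
  obtain ⟨g₁, hg₁, hg₁Q, hg₁P⟩ := hind Q P hPQ.symm
  obtain ⟨g₂, hg₂, hg₂P, hg₂Q⟩ := hind P Q hPQ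
  have hterm : ∀ k ∈ F, (q - p) * |a k| ≤ a k * (g₁ (y k) - g₂ (y k)) := by
    intro k hk
    by_cases ha : 0 ≤ a k
    · have h₁ := hg₁P k (Finset.mem_filter.2 ⟨hk, ha⟩)
      have h₂ := hg₂P k (Finset.mem_filter.2 ⟨hk, ha⟩)
      rw [abs_of_nonneg ha]
      nlinarith
    · have h₁ := hg₁Q k (Finset.mem_filter.2 ⟨hk, ha⟩)
      have h₂ := hg₂Q k (Finset.mem_filter.2 ⟨hk, ha⟩)
      rw [abs_of_neg (not_le.mp ha)]
      nlinarith
  have hnorm : ∀ g : E →L[ℝ] ℝ, ‖g‖ ≤ 1 → |g (∑ k ∈ F, a k • y k)| ≤ ‖∑ k ∈ F, a k • y k‖ :=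
    fun g hg => (g.le_opNorm _).trans (mul_le_of_le_one_left (norm_nonneg _) hg)
  calc (q - p) * ∑ k ∈ F, |a k| ≤ ∑ k ∈ F, a k * (g₁ (y k) - g₂ (y k)) := by
        rw [Finset.mul_sum]
        exact Finset.sum_le_sum hterm
    _ = g₁ (∑ k ∈ F, a k • y k) - g₂ (∑ k ∈ F, a k • y k) := by
        simp [map_sum, mul_sub, Finset.sum_sub_distrib]
    _ ≤ 2 * ‖∑ k ∈ F, a k • y k‖ := by
        linarith [abs_le.mp (hnorm g₁ hg₁), abs_le.mp (hnorm g₂ hg₂)]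

variable [CompleteSpace E]

lemma containsEllOne_of_mul_sum_abs_le {y : ℕ → E} (hy : ∀ k, ‖y k‖ ≤ 1) {c : ℝ} (hc : 0 < c)
    (hlow : ∀ (a : ℕ → ℝ) (F : Finset ℕ), c * ∑ k ∈ F, |a k| ≤ ‖∑ k ∈ F, a k • y k‖) :
    ContainsEllOne E := by
  have hsum : ∀ a : lp (fun _ : ℕ => ℝ) 1, Summable fun k => a k • y k := fun a =>
    (lp_one_hasSum_norm a).summable.of_norm_bounded fun k => by
      rw [norm_smul]
      exact mul_le_of_le_one_right (norm_nonneg _) (hy k)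
  let T : lp (fun _ : ℕ => ℝ) 1 →ₗ[ℝ] E :=
    { toFun := fun a => ∑' k, a k • y k
      map_add' := fun a b => by
        simp only [lp.coeFn_add, Pi.add_apply, add_smul, (hsum a).tsum_add (hsum b)]
      map_smul' := fun r a => by
        simp only [lp.coeFn_smul, Pi.smul_apply, smul_eq_mul, mul_smul, RingHom.id_apply,
          tsum_const_smul''] }
  have hT : ∀ a, HasSum (fun k => a k • y k) (T a) := fun a => (hsum a).hasSum
  refine ⟨T.mkContinuous 1 fun a => ?_, c, hc, fun a => ?_⟩
  · refine le_of_tendsto_of_tendsto' (hT a).norm ((lp_one_hasSum_norm a).const_mul 1)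
      fun F => (norm_sum_le _ _).trans ?_
    rw [one_mul]
    exact Finset.sum_le_sum fun k _ => by
      rw [norm_smul]
      exact mul_le_of_le_one_right (norm_nonneg _) (hy k)
  · refine le_of_tendsto_of_tendsto' ((lp_one_hasSum_norm a).const_mul c) (hT a).norm
      fun F => ?_
    simpa [Finset.mul_sum, Real.norm_eq_abs] using hlow (fun k => a k) F

theorem IsIndependent.containsEllOne {y : ℕ → E} {p q : ℝ} (hind : IsIndependent y p q)
    (hy : ∀ k, ‖y k‖ ≤ 1) (hpq : p < q) : ContainsEllOne E :=
  containsEllOne_of_mul_sum_abs_le hy (half_pos (sub_pos.2 hpq)) fun a F => by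
    linarith [hind.mul_sum_abs_le a F]

end EllOne

section WeaklyCauchy

variable {E : Type*} [NormedAddCommGroup E] [NormedSpace ℝ E]

def WeaklyCauchy (x : ℕ → E) : Prop :=
  ∀ g : E →L[ℝ] ℝ, ∃ L, Tendsto (fun n => g (x n)) atTop (𝓝 L)

lemma abs_apply_le_of_norm_le {g : E →L[ℝ] ℝ} {C : ℝ} (hg : ‖g‖ ≤ C) {x : E} (hx : ‖x‖ ≤ 1) :
    |g x| ≤ C :=
  (g.le_opNorm x).trans ((mul_le_of_le_one_right (norm_nonneg g) hx).trans hg)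

lemma weaklyCauchy_of_forall_norm_le_one {x : ℕ → E}
    (h : ∀ g : E →L[ℝ] ℝ, ‖g‖ ≤ 1 → ∃ L, Tendsto (fun n => g (x n)) atTop (𝓝 L)) :
    WeaklyCauchy x := by
  intro g
  rcases eq_or_ne g 0 with rfl | hg
  · exact ⟨0, by simp⟩
  have hg' : 0 < ‖g‖ := norm_pos_iff.2 hg
  obtain ⟨L, hL⟩ := h (‖g‖⁻¹ • g) (by rw [norm_smul, norm_inv, norm_norm, inv_mul_cancel₀ hg'.ne'])
  refine ⟨‖g‖ * L, (hL.const_mul ‖g‖).congr fun n => ?_⟩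
  simp [mul_inv_cancel_left₀ hg'.ne']

lemma exists_strictMono_eventually_mem {P : ℕ → Set ℕ → Prop}
    (h : ∀ j M, M.Infinite → ∃ M' ⊆ M, M'.Infinite ∧ P j M') :
    ∃ φ : ℕ → ℕ, StrictMono φ ∧ ∀ j, ∃ M, P j M ∧ ∀ᶠ k in atTop, φ k ∈ M := by
  obtain ⟨MM, -, hMM⟩ := exists_seq_of_forall_exists (R := fun j M M' => M'.1 ⊆ M.1 ∧ P j M'.1)
    (⟨univ, infinite_univ⟩ : {M : Set ℕ // M.Infinite}) fun j M => by
      obtain ⟨M', hM'M, hM', hP⟩ := h j M.1 M.2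
      exact ⟨⟨M', hM'⟩, hM'M, hP⟩
  have hanti : Antitone fun j => (MM j).1 := antitone_nat_of_succ_le fun j => (hMM j).1
  obtain ⟨φ, hφ, hφM⟩ := exists_strictMono_forall_mem fun k => (MM (k + 1)).2
  exact ⟨φ, hφ, fun j => ⟨_, (hMM j).2,
    eventually_atTop.2 ⟨j, fun k hk => hanti (Nat.succ_le_succ hk) (hφM k)⟩⟩⟩

lemma infinite_sep_of_frequently {φ : ℕ → ℕ} (hφ : StrictMono φ) {M : Set ℕ}
    (hM : ∀ᶠ k in atTop, φ k ∈ M) {p : ℕ → Prop} (h : ∃ᶠ k in atTop, p (φ k)) :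
    {n ∈ M | p n}.Infinite := by
  refine ((Nat.frequently_atTop_iff_infinite.1 (h.and_eventually hM)).image
    hφ.injective.injOn).mono ?_
  rintro _ ⟨k, ⟨hp, hk⟩, rfl⟩
  exact ⟨hk, hp⟩

variable [CompleteSpace E]

lemma exists_subset_not_oscillating (hE : ¬ ContainsEllOne E) {x : ℕ → E}
    (hx : ∀ n, ‖x n‖ ≤ 1) {p q : ℝ} (hpq : p < q) {M : Set ℕ} (hM : M.Infinite) :
    ∃ M' ⊆ M, M'.Infinite ∧ ∀ g : E →L[ℝ] ℝ, ‖g‖ ≤ 1 →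
      ¬ ({n ∈ M' | g (x n) < p}.Infinite ∧ {n ∈ M' | q < g (x n)}.Infinite) := by
  rcases Rosenthal.dichotomy (S := closedBall (0 : E →L[ℝ] ℝ) 1)
    (fun n => {g | g.1 (x n) < p}) (fun n => {g | q < g.1 (x n)}) hM with
    ⟨M', hM'M, hM', h⟩ | ⟨m, -, -, hind⟩
  · exact ⟨M', hM'M, hM', fun g hg => h ⟨g, mem_closedBall_zero_iff.2 hg⟩⟩
  · have hind' : IsIndependent (x ∘ m) p q := fun P Q hPQ => by
      obtain ⟨g, hP, hQ⟩ := hind P Q hPQ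
      exact ⟨g.1, mem_closedBall_zero_iff.1 g.2, hP, hQ⟩
    exact absurd (hind'.containsEllOne (fun k => hx (m k)) hpq) hE

/-- **Rosenthal's `ℓ₁` theorem.** -/
theorem exists_weaklyCauchy_subseq (hE : ¬ ContainsEllOne E) {x : ℕ → E}
    (hx : ∀ n, ‖x n‖ ≤ 1) : ∃ φ : ℕ → ℕ, StrictMono φ ∧ WeaklyCauchy (x ∘ φ) := by
  obtain ⟨e, he⟩ := exists_surjective_nat (ℚ × ℚ)
  obtain ⟨φ, hφ, hφM⟩ := exists_strictMono_eventually_mem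
    (P := fun j M => ((e j).1 : ℝ) < (e j).2 → ∀ g : E →L[ℝ] ℝ, ‖g‖ ≤ 1 →
      ¬ ({n ∈ M | g (x n) < (e j).1}.Infinite ∧ {n ∈ M | ((e j).2 : ℝ) < g (x n)}.Infinite))
    fun j M hM => by
      by_cases hj : ((e j).1 : ℝ) < (e j).2
      · obtain ⟨M', hM'M, hM', hosc⟩ := exists_subset_not_oscillating hE hx hj hM
        exact ⟨M', hM'M, hM', fun _ => hosc⟩
      · exact ⟨M, subset_rfl, hM, fun h => absurd h hj⟩
  refine ⟨φ, hφ, weaklyCauchy_of_forall_norm_le_one fun g hg => ?_⟩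
  have hbound : ∀ k, |g (x (φ k))| ≤ 1 := fun k => abs_apply_le_of_norm_le hg (hx _)
  refine tendsto_of_no_upcrossings Rat.denseRange_cast ?_
    (isBoundedUnder_of ⟨1, fun k => (abs_le.mp (hbound k)).2⟩)
    (isBoundedUnder_of ⟨-1, fun k => (abs_le.mp (hbound k)).1⟩)
  rintro _ ⟨a, rfl⟩ _ ⟨b, rfl⟩ hab ⟨ha, hb⟩
  obtain ⟨j, hj⟩ := he (a, b)
  obtain ⟨M, hPM, hM⟩ := hφM j
  rw [hj] at hPM
  exact hPM hab g hg ⟨infinite_sep_of_frequently hφ hM ha, infinite_sep_of_frequently hφ hM hb⟩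

end WeaklyCauchy

section Beta

variable {E : Type*} [NormedAddCommGroup E] [NormedSpace ℝ E]

lemma exists_norm_le_one_lt_apply {g : E →L[ℝ] ℝ} {r : ℝ} (hr : r < ‖g‖) :
    ∃ x, ‖x‖ ≤ 1 ∧ r < g x := by
  obtain ⟨x, hx1, hx⟩ := g.exists_lt_apply_of_lt_opNorm hr
  rw [Real.norm_eq_abs] at hx
  rcases le_or_gt 0 (g x) with h | h
  · exact ⟨x, hx1.le, by rwa [abs_of_nonneg h] at hx⟩
  · exact ⟨-x, by rw [norm_neg]; exact hx1.le, by rw [map_neg]; rwa [abs_of_neg h] at hx⟩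

lemma exists_strictMono_lt_apply {f : ℕ → E →L[ℝ] ℝ} {r : ℝ}
    (hr : r < limsup (fun n => ‖f n‖) atTop) :
    ∃ φ : ℕ → ℕ, StrictMono φ ∧ ∃ x : ℕ → E, (∀ k, ‖x k‖ ≤ 1) ∧ ∀ k, r < f (φ k) (x k) := by
  obtain ⟨φ, hφ, hrφ⟩ := extraction_of_frequently_atTop <| frequently_lt_of_lt_limsup
    (isBoundedUnder_of ⟨0, fun n => norm_nonneg (f n)⟩).isCoboundedUnder_le hr
  choose x hx1 hx using fun k => exists_norm_le_one_lt_apply (hrφ k)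
  exact ⟨φ, hφ, x, hx1, hx⟩

lemma WeakStarNull.exists_norm_le [CompleteSpace E] {f : ℕ → E →L[ℝ] ℝ}
    (hf : WeakStarNull E f) : ∃ C, ∀ n, ‖f n‖ ≤ C :=
  banach_steinhaus fun x => by
    obtain ⟨C, hC⟩ := (hf x).norm.bddAbove_range
    exact ⟨C, fun n => hC (mem_range_self n)⟩

lemma WeakStarNull.comp {f : ℕ → E →L[ℝ] ℝ} (hf : WeakStarNull E f) {φ : ℕ → ℕ}
    (hφ : StrictMono φ) : WeakStarNull E (f ∘ φ) :=
  fun x => (hf x).comp hφ.tendsto_atTop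

lemma WeakStarNull.exists_strictMono_abs_lt {f : ℕ → E →L[ℝ] ℝ} (hf : WeakStarNull E f)
    (y : ℕ → E) {ε : ℝ} (hε : 0 < ε) :
    ∃ θ : ℕ → ℕ, StrictMono θ ∧ ∀ t, |f (θ (t + 1)) (y (θ t))| < ε := by
  have step : ∀ a, ∃ b, a < b ∧ |f b (y a)| < ε := fun a => by
    have hlim := (hf (y a)).abs
    rw [abs_zero] at hlim
    exact ((eventually_gt_atTop a).and (hlim.eventually_lt_const hε)).exists
  obtain ⟨θ, -, hθ⟩ := exists_seq_of_forall_exists (R := fun _ a b => a < b ∧ |f b (y a)| < ε)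
    0 fun _ => step
  exact ⟨θ, strictMono_nat_of_lt_succ fun t => (hθ t).1, fun t => (hθ t).2⟩

lemma WeaklyCauchy.weaklyNull_sub {y : ℕ → E} (hy : WeaklyCauchy y) {φ ψ : ℕ → ℕ}
    (hφ : Tendsto φ atTop atTop) (hψ : Tendsto ψ atTop atTop) :
    WeaklyNull E fun t => y (φ t) - y (ψ t) := fun g => by
  obtain ⟨L, hL⟩ := hy g
  simpa using (hL.comp hφ).sub (hL.comp hψ)

lemma WeaklyNull.const_smul {z : ℕ → E} (hz : WeaklyNull E z) (c : ℝ) :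
    WeaklyNull E fun t => c • z t := fun g => by
  simpa using (hz g).const_mul c

lemma WeaklyNull.extend {z : ℕ → E} (hz : WeaklyNull E z) {ρ : ℕ → ℕ} (hρ : StrictMono ρ) :
    WeaklyNull E (Function.extend ρ z 0) := fun g => by
  rw [tendsto_def]
  intro U hU
  obtain ⟨T, hT⟩ := eventually_atTop.1 (hz g hU)
  filter_upwards [eventually_ge_atTop (ρ T)] with m hm
  by_cases h : ∃ t, ρ t = m
  · obtain ⟨t, rfl⟩ := h
    simpa [hρ.injective.extend_apply] using hT t (hρ.le_iff_le.1 hm)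
  · simpa [Function.extend_apply' _ _ _ h] using mem_of_mem_nhds hU

lemma limsup_le_betaQ {f : ℕ → E →L[ℝ] ℝ} {C : ℝ} (hC : ∀ n, ‖f n‖ ≤ C) {x : ℕ → E}
    (hx1 : ∀ n, x n ∈ closedBall (0 : E) 1) (hx : WeaklyNull E x) :
    limsup (fun n => |f n (x n)|) atTop ≤ betaQ f := by
  refine le_csSup ⟨C, ?_⟩ ⟨x, hx1, hx, rfl⟩
  rintro _ ⟨y, hy1, -, rfl⟩
  exact limsup_le_of_le (isBoundedUnder_of ⟨0, fun n => abs_nonneg _⟩).isCoboundedUnder_le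
    (Eventually.of_forall fun n =>
      abs_apply_le_of_norm_le (hC n) (mem_closedBall_zero_iff.1 (hy1 n)))

lemma le_betaQ_of_strictMono {f : ℕ → E →L[ℝ] ℝ} {C : ℝ} (hC : ∀ n, ‖f n‖ ≤ C) {ρ : ℕ → ℕ}
    (hρ : StrictMono ρ) {z : ℕ → E} (hz1 : ∀ t, ‖z t‖ ≤ 1) (hz : WeaklyNull E z) {a : ℝ}
    (ha : ∀ t, a ≤ |f (ρ t) (z t)|) : a ≤ betaQ f := by
  have hZ1 : ∀ m, ‖Function.extend ρ z 0 m‖ ≤ 1 := fun m => by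
    by_cases h : ∃ t, ρ t = m
    · obtain ⟨t, rfl⟩ := h
      rw [hρ.injective.extend_apply]
      exact hz1 t
    · simp [Function.extend_apply' _ _ _ h]
  refine (le_limsup_of_frequently_le ?_ ?_).trans
    (limsup_le_betaQ hC (fun m => mem_closedBall_zero_iff.2 (hZ1 m)) (hz.extend hρ))
  · exact hρ.tendsto_atTop.frequently (Frequently.of_forall fun t => by
      simpa [hρ.injective.extend_apply] using ha t)
  · exact isBoundedUnder_of ⟨C, fun m => abs_apply_le_of_norm_le (hC m) (hZ1 m)⟩

end Beta

theorem stmt19 {X : Type*} [NormedAddCommGroup X] [NormedSpace ℝ X] [CompleteSpace X]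
    (hX : ¬ ∃ T : lp (fun _ : ℕ => ℝ) 1 →L[ℝ] X, ∃ c > (0 : ℝ), ∀ v, c * ‖v‖ ≤ ‖T v‖)
    (f : ℕ → X →L[ℝ] ℝ) (hf : WeakStarNull X f) :
    limsup (fun n => ‖f n‖) atTop ≤ 2 * betaQ f := by
  set L := limsup (fun n => ‖f n‖) atTop
  obtain ⟨C, hC⟩ := hf.exists_norm_le
  refine le_of_forall_pos_le_add fun ε hε => ?_
  obtain ⟨φ, hφ, x, hx1, hx⟩ := exists_strictMono_lt_apply (f := f) (r := L - ε / 2) (by linarith)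
  obtain ⟨ψ, hψ, hcauchy⟩ := exists_weaklyCauchy_subseq hX hx1
  obtain ⟨θ, hθ, hsmall⟩ := (hf.comp (hφ.comp hψ)).exists_strictMono_abs_lt (x ∘ ψ) (half_pos hε)
  set z := fun t => (2 : ℝ)⁻¹ • (x (ψ (θ (t + 1))) - x (ψ (θ t)))
  have hz1 : ∀ t, ‖z t‖ ≤ 1 := fun t => by
    simp only [z, norm_smul, norm_inv, Real.norm_ofNat]
    linarith [norm_sub_le (x (ψ (θ (t + 1)))) (x (ψ (θ t))), hx1 (ψ (θ (t + 1))), hx1 (ψ (θ t))]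
  have hz : WeaklyNull X z :=
    (hcauchy.weaklyNull_sub (hθ.tendsto_atTop.comp (tendsto_add_atTop_nat 1))
      hθ.tendsto_atTop).const_smul _
  have hlow : ∀ t, (L - ε) / 2 ≤ |f (φ (ψ (θ (t + 1)))) (z t)| := fun t => by
    have h₁ := hx (ψ (θ (t + 1)))
    have h₂ := (abs_lt.mp (hsmall t)).2
    simp only [Function.comp_apply] at h₂
    refine le_trans ?_ (le_abs_self _)
    simp only [z, map_smul, map_sub, smul_eq_mul]
    linarith
  have := le_betaQ_of_strictMono hC (hφ.comp (hψ.comp (hθ.comp (strictMono_id.add_const 1))))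
    hz1 hz hlow
  linarith
end
end
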